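/- arXiv:1401.0330 — 2 statements merged into one kernel-verified Lean document; each statement's English description precedes it below -/
import Mathlib

section
/- Let A = k⟨x_1,x_2⟩/(x_2x_1 - x_1x_2 - x_1^2) be the Jordan plane over a field k. Every graded algebra automorphism θ of A (with deg x_1 = deg x_2 = 1) has the form θ(x_1) = a·x_1, θ(x_2) = b·x_1 + a·x_2 for some a, b ∈ k with a ≠ 0. -/
open TensorProduct

/-- Every graded automorphism of the Jordan plane
`A = k⟨x₁,x₂⟩/(x₂x₁ - x₁x₂ - x₁²)` — i.e. every invertible linear map `θ` on the degree-one
component `V = k·x₁ ⊕ k·x₂` preserving (the line spanned by) the relation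
`r = x₂⊗x₁ - x₁⊗x₂ - x₁⊗x₁` in `V ⊗ V` — has the form `θ(x₁) = a·x₁`,
`θ(x₂) = b·x₁ + a·x₂` with `a ≠ 0`. -/
theorem stmt3 (k : Type*) [Field k]
    (θ : (Fin 2 → k) ≃ₗ[k] (Fin 2 → k))
    (hθ : TensorProduct.map (θ : (Fin 2 → k) →ₗ[k] (Fin 2 → k))
            (θ : (Fin 2 → k) →ₗ[k] (Fin 2 → k))
            ((![0, 1] : Fin 2 → k) ⊗ₜ[k] (![1, 0] : Fin 2 → k)
              - (![1, 0] : Fin 2 → k) ⊗ₜ[k] (![0, 1] : Fin 2 → k)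
              - (![1, 0] : Fin 2 → k) ⊗ₜ[k] (![1, 0] : Fin 2 → k))
          ∈ Submodule.span k
              {(![0, 1] : Fin 2 → k) ⊗ₜ[k] (![1, 0] : Fin 2 → k)
                - (![1, 0] : Fin 2 → k) ⊗ₜ[k] (![0, 1] : Fin 2 → k)
                - (![1, 0] : Fin 2 → k) ⊗ₜ[k] (![1, 0] : Fin 2 → k)}) :
    ∃ a b : k, a ≠ 0 ∧
      θ (![1, 0] : Fin 2 → k) = a • (![1, 0] : Fin 2 → k) ∧
      θ (![0, 1] : Fin 2 → k)
        = b • (![1, 0] : Fin 2 → k) + a • (![0, 1] : Fin 2 → k) := by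
  rw [Submodule.mem_span_singleton] at hθ
  obtain ⟨c, hc⟩ := hθ
  set e1 : Fin 2 → k := ![1, 0] with he1
  set e2 : Fin 2 → k := ![0, 1] with he2
  have hmap : TensorProduct.map (θ : (Fin 2 → k) →ₗ[k] (Fin 2 → k))
      (θ : (Fin 2 → k) →ₗ[k] (Fin 2 → k)) (e2 ⊗ₜ[k] e1 - e1 ⊗ₜ[k] e2 - e1 ⊗ₜ[k] e1)
      = θ e2 ⊗ₜ[k] θ e1 - θ e1 ⊗ₜ[k] θ e2 - θ e1 ⊗ₜ[k] θ e1 := by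
    simp [map_sub]
  rw [hmap] at hc
  set B := (Pi.basisFun k (Fin 2)).tensorProduct (Pi.basisFun k (Fin 2)) with hB
  have key : ∀ i j : Fin 2,
      c * (e2 i * e1 j - e1 i * e2 j - e1 i * e1 j)
        = θ e2 i * θ e1 j - θ e1 i * θ e2 j - θ e1 i * θ e1 j := by
    intro i j
    have h := congrArg (fun x => B.repr x (i, j)) hc
    simpa [hB, Module.Basis.tensorProduct_repr_tmul_apply, Pi.basisFun_repr,
      mul_sub, sub_mul, mul_comm, mul_left_comm, smul_eq_mul] using h
  have h00 := key 0 0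
  have h01 := key 0 1
  have h10 := key 1 0
  have h11 := key 1 1
  simp [he1, he2] at h00 h01 h10 h11
  rw [← he1, ← he2] at h00 h01 h10 h11
  -- h11 should give θ e1 1 = 0, h00 gives c = (θ e1 0)^2, etc.
  have hq : θ e1 1 = 0 := by
    have h : θ e1 1 * θ e1 1 = 0 := by linear_combination h11
    exact mul_self_eq_zero.mp h
  have hp : θ e1 0 ≠ 0 := by
    intro h
    have hz : θ e1 = 0 := by
      funext i; fin_cases i
      · simpa using h
      · simpa using hq
    have : e1 = 0 := by
      have := θ.map_eq_zero_iff.mp hz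
      simpa using this
    have h1 : e1 0 = 1 := by simp [he1]
    rw [this] at h1
    simp at h1
  have hc2 : c = θ e1 0 * θ e1 0 := by linear_combination -h00
  have hs : θ e2 1 = θ e1 0 := by
    have h : θ e1 0 * θ e2 1 = θ e1 0 * θ e1 0 := by
      linear_combination hc2 - h10 + (θ e2 0 + θ e1 0) * hq
    exact mul_left_cancel₀ hp h
  refine ⟨θ e1 0, θ e2 0, hp, ?_, ?_⟩
  · funext i; fin_cases i
    · simp [he1]
    · simpa [he1] using hq
  · funext i; fin_cases i
    · simp [he1, he2]
    · simpa [he1, he2] using hs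
end

section
/- Let A = k⟨x,y⟩/(yx - xy - x^2) be the Jordan plane with Nakayama automorphism ν given by ν(x)=x, ν(y)=2x+y, and let θ be the graded automorphism θ(x)=ax, θ(y)=bx+ay (a ≠ 0). Then there exists an integer n with θ^n = ν and a^2 = 1 if and only if either (a = 1 and b = ±2/n for some nonzero integer n) or (a = -1 and b = ±2/n for some nonzero even integer n), where char k = 0. -/
lemma aux_pow (k : Type*) [Field k] (a b : k) (ha : a ≠ 0)
    (M : GL (Fin 2) k) (hM : (M : Matrix (Fin 2) (Fin 2) k) = !![a, 0; b, a]) :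
    ∀ n : ℤ, ((M ^ n : GL (Fin 2) k) : Matrix (Fin 2) (Fin 2) k)
      = !![a ^ n, 0; (n : k) * a ^ (n - 1) * b, a ^ n] := by
  have hinv : ((M⁻¹ : GL (Fin 2) k) : Matrix (Fin 2) (Fin 2) k)
      = !![a⁻¹, 0; -(a⁻¹ * a⁻¹ * b), a⁻¹] := by
    apply Units.inv_eq_of_mul_eq_one_right
    rw [hM]
    ext i j
    fin_cases i <;> fin_cases j <;>
      simp [Matrix.mul_apply, Fin.sum_univ_two, Matrix.one_apply] <;>
      field_simp <;> ring
  intro n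
  induction n using Int.induction_on with
  | zero => simp [Matrix.one_fin_two]
  | succ m ih =>
      have key : ((M ^ ((m : ℤ) + 1) : GL (Fin 2) k) : Matrix (Fin 2) (Fin 2) k)
          = ((M ^ (m : ℤ) : GL (Fin 2) k) : Matrix (Fin 2) (Fin 2) k) * M := by
        rw [zpow_add_one]; rfl
      rw [key, ih, hM]
      have e1 : a ^ m * a = a ^ ((m : ℤ) + 1) := by
        rw [← zpow_natCast a m, ← zpow_add_one₀ ha]
      have e2 : a ^ ((m : ℤ) - 1) * a = a ^ m := by
        rw [← zpow_natCast a m, ← zpow_add_one₀ ha]; norm_num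
      ext i j
      fin_cases i <;> fin_cases j <;>
        simp [Matrix.mul_apply, Fin.sum_univ_two]
      · exact e1
      · push_cast
        linear_combination ((m : k) * b) * e2
      · exact e1
  | pred m ih =>
      have key : ((M ^ (-(m : ℤ) - 1) : GL (Fin 2) k) : Matrix (Fin 2) (Fin 2) k)
          = ((M ^ (-(m : ℤ)) : GL (Fin 2) k) : Matrix (Fin 2) (Fin 2) k) * (M⁻¹ : GL (Fin 2) k) := by
        rw [zpow_sub_one]; rfl
      rw [key, ih, hinv]
      have e1 : (a ^ m)⁻¹ * a⁻¹ = a ^ (-(m : ℤ) - 1) := by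
        rw [← zpow_natCast a m, ← zpow_neg, ← zpow_sub_one₀ ha]
      have h1 : a ^ (-(m : ℤ) - 1 - 1) = a ^ (-(m : ℤ) - 1) * a⁻¹ := zpow_sub_one₀ ha _
      have h2 : (a ^ m)⁻¹ = a ^ (-(m : ℤ) - 1) * a := by
        rw [← zpow_natCast a m, ← zpow_neg, ← zpow_add_one₀ ha]
        norm_num
      ext i j
      fin_cases i <;> fin_cases j <;>
        simp [Matrix.mul_apply, Fin.sum_univ_two]
      · exact e1
      · push_cast
        rw [h1, h2]
        field_simp
        ring
      · exact e1

/-- For the Jordan plane over a field of characteristic zero, with Nakayama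
automorphism `ν` (matrix `[[1,0],[2,1]]` on generators) and graded automorphism `θ` (matrix
`[[a,0],[b,a]]`, `a ≠ 0`): there is an integer `n` with `θⁿ = ν` and `a² = 1` if and only if
either `a = 1` and `b = ±2/n` for some nonzero integer `n`, or `a = -1` and `b = ±2/n` for
some nonzero even integer `n`. -/
theorem stmt5 (k : Type*) [Field k] [CharZero k] (a b : k) (ha : a ≠ 0)
    (M : GL (Fin 2) k) (hM : (M : Matrix (Fin 2) (Fin 2) k) = !![a, 0; b, a]) :
    (∃ n : ℤ, ((M ^ n : GL (Fin 2) k) : Matrix (Fin 2) (Fin 2) k) = !![1, 0; 2, 1] ∧ a ^ 2 = 1)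
    ↔ ((a = 1 ∧ ∃ n : ℤ, n ≠ 0 ∧ (b = 2 / (n : k) ∨ b = -(2 / (n : k)))) ∨
       (a = -1 ∧ ∃ n : ℤ, n ≠ 0 ∧ Even n ∧ (b = 2 / (n : k) ∨ b = -(2 / (n : k))))) := by
  have hpow := aux_pow k a b ha M hM
  constructor
  · rintro ⟨n, hn, ha2⟩
    rw [hpow n] at hn
    have h00 : a ^ n = 1 := by
      have := congrFun (congrFun hn 0) 0; simpa using this
    have h10 : (n : k) * a ^ (n - 1) * b = 2 := by
      have := congrFun (congrFun hn 1) 0; simpa using this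
    have hn0 : n ≠ 0 := by
      rintro rfl
      simp at h10
    have hnk : (n : k) ≠ 0 := Int.cast_ne_zero.2 hn0
    have ha1 : a = 1 ∨ a = -1 := by
      rw [sq] at ha2; exact mul_self_eq_one_iff.1 ha2
    rcases ha1 with rfl | rfl
    · left
      refine ⟨rfl, n, hn0, Or.inl ?_⟩
      rw [one_zpow] at h10
      rw [eq_div_iff hnk]
      linear_combination h10
    · right
      have hev : Even n := by
        rcases Int.even_or_odd n with h | h
        · exact h
        · exfalso
          rw [h.neg_one_zpow] at h00
          exact (by norm_num : (-1 : k) ≠ 1) h00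
      refine ⟨rfl, n, hn0, hev, Or.inr ?_⟩
      have ho : (-1 : k) ^ (n - 1) = -1 := (hev.sub_odd odd_one).neg_one_zpow
      rw [ho] at h10
      field_simp
      linear_combination -h10
  · rintro (⟨rfl, n, hn0, hb⟩ | ⟨rfl, n, hn0, hne, hb⟩)
    · have hnk : (n : k) ≠ 0 := Int.cast_ne_zero.2 hn0
      rcases hb with rfl | rfl
      · exact ⟨n, by rw [hpow n]; simp [one_zpow]; field_simp, by norm_num⟩
      · refine ⟨-n, ?_, by norm_num⟩
        rw [hpow (-n)]
        simp [one_zpow]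
        field_simp
    · have hnk : (n : k) ≠ 0 := Int.cast_ne_zero.2 hn0
      have hodd : Odd (n - 1) := hne.sub_odd odd_one
      have he : (-1 : k) ^ n = 1 := hne.neg_one_zpow
      have ho : (-1 : k) ^ (n - 1) = -1 := hodd.neg_one_zpow
      rcases hb with rfl | rfl
      · refine ⟨-n, ?_, by norm_num⟩
        rw [hpow (-n)]
        have he' : (-1 : k) ^ (-n) = 1 := (hne.neg).neg_one_zpow
        have ho' : (-1 : k) ^ (-n - 1) = -1 := ((hne.neg).sub_odd odd_one).neg_one_zpow
        rw [he', ho']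
        push_cast
        field_simp
      · refine ⟨n, ?_, by norm_num⟩
        rw [hpow n, he, ho]
        field_simp
end
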